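/- arXiv:1810.12584 — 4 statements merged into one kernel-verified Lean document; each statement's English description precedes it below -/
import Mathlib

section
/- Let S ⊆ T be a nonempty finite subset with one-sided Hausdorff distance d_H(T, S) = sup_{t∈T} inf_{s∈S} ‖t − s‖₂ ≤ β for some β ≥ 0. Then λ_S ≥ ε* − β·(1 + max_{θ∈Ω} ‖θ‖₂). (Quantitative lower bound from the proof of Theorem 1, claim 2.) -/
/-
Each residual `|y − θᵀφ|` is Lipschitz in the pair `(φ, y)` with constant `1 + ‖θ‖₂`
(Cauchy–Schwarz on the regressor part). Since every point of `T` lies within `β` of a point of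
`S`, this gives `ε̄_T(θ) ≤ ε̄_S(θ) + β (1 + ‖θ‖₂)` for every `θ ∈ Ω`; it remains to bound `‖θ‖₂`
by its maximum over `Ω` and minimise over `θ`.
-/

open Matrix Set

/-- Worst-case error bound `ε̄_R(θ) = max(0, sup_{(φ,y)∈R} |y − θᵀφ| − d̄)`. -/
noncomputable def ebar {m : ℕ} (dbar : ℝ) (R : Set ((Fin m → ℝ) × ℝ)) (θ : Fin m → ℝ) : ℝ :=
  max 0 (sSup ((fun q => |q.2 - θ ⬝ᵥ q.1| - dbar) '' R))

/-- Euclidean (2-)norm of a vector in ℝᵐ. -/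
noncomputable def enorm {m : ℕ} (θ : Fin m → ℝ) : ℝ :=
  Real.sqrt (∑ i, (θ i) ^ 2)

/-- Euclidean distance between regressor–output pairs, i.e. the 2-norm on ℝ^{m+1}. -/
noncomputable def pairDist {m : ℕ} (t s : (Fin m → ℝ) × ℝ) : ℝ :=
  Real.sqrt (∑ i, (t.1 i - s.1 i) ^ 2 + (t.2 - s.2) ^ 2)

lemma abs_dotProduct_le_enorm_mul {m : ℕ} (θ v : Fin m → ℝ) :
    |θ ⬝ᵥ v| ≤ _root_.enorm θ * _root_.enorm v := by
  rw [_root_.enorm, _root_.enorm, ← Real.sqrt_mul (by positivity), ← Real.sqrt_sq_eq_abs]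
  exact Real.sqrt_le_sqrt (Finset.sum_mul_sq_le_sq_mul_sq Finset.univ θ v)

lemma abs_snd_sub_le_pairDist {m : ℕ} (t s : (Fin m → ℝ) × ℝ) :
    |t.2 - s.2| ≤ pairDist t s := by
  rw [← Real.sqrt_sq_eq_abs]
  exact Real.sqrt_le_sqrt (le_add_of_nonneg_left (by positivity))

lemma enorm_fst_sub_le_pairDist {m : ℕ} (t s : (Fin m → ℝ) × ℝ) :
    _root_.enorm (t.1 - s.1) ≤ pairDist t s :=
  Real.sqrt_le_sqrt (le_add_of_nonneg_right (by positivity))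

lemma continuous_pairDist_left {m : ℕ} (s : (Fin m → ℝ) × ℝ) :
    Continuous fun t : (Fin m → ℝ) × ℝ => pairDist t s := by
  unfold pairDist; fun_prop

lemma continuous_euclidean_enorm {m : ℕ} : Continuous (_root_.enorm : (Fin m → ℝ) → ℝ) := by
  unfold _root_.enorm; fun_prop

lemma abs_residual_le_add_pairDist {m : ℕ} (θ : Fin m → ℝ) (t s : (Fin m → ℝ) × ℝ) :
    |t.2 - θ ⬝ᵥ t.1| ≤ |s.2 - θ ⬝ᵥ s.1| + (1 + _root_.enorm θ) * pairDist t s := by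
  have hdot : |θ ⬝ᵥ t.1 - θ ⬝ᵥ s.1| ≤ _root_.enorm θ * pairDist t s := by
    rw [← dotProduct_sub]
    exact (abs_dotProduct_le_enorm_mul θ _).trans
      (mul_le_mul_of_nonneg_left (enorm_fst_sub_le_pairDist t s) (Real.sqrt_nonneg _))
  calc |t.2 - θ ⬝ᵥ t.1|
      = |(s.2 - θ ⬝ᵥ s.1) + (t.2 - s.2) - (θ ⬝ᵥ t.1 - θ ⬝ᵥ s.1)| := by ring_nf
    _ ≤ |s.2 - θ ⬝ᵥ s.1| + |t.2 - s.2| + |θ ⬝ᵥ t.1 - θ ⬝ᵥ s.1| :=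
        (abs_sub _ _).trans (add_le_add_left (abs_add_le _ _) _)
    _ ≤ |s.2 - θ ⬝ᵥ s.1| + (1 + _root_.enorm θ) * pairDist t s := by
        linarith [abs_snd_sub_le_pairDist t s]

-- `sSup` of a set of reals that is not bounded above is `0`, so the hypothesis only bites once
-- compactness of `T` bounds the distances.
lemma exists_pairDist_le_of_hausdorff_le {m : ℕ} {T S : Set ((Fin m → ℝ) × ℝ)} {β : ℝ}
    (hTc : IsCompact T) (hSne : S.Nonempty) (hSfin : S.Finite)
    (hHaus : sSup ((fun t => sInf ((fun s => pairDist t s) '' S)) '' T) ≤ β) :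
    ∀ t ∈ T, ∃ s ∈ S, pairDist t s ≤ β := by
  obtain ⟨s₀, hs₀⟩ := hSne
  have hbdd : BddAbove ((fun t => sInf ((fun s => pairDist t s) '' S)) '' T) := by
    obtain ⟨M, hM⟩ := (hTc.image (continuous_pairDist_left s₀)).bddAbove
    refine ⟨M, ?_⟩
    rintro x ⟨t, ht, rfl⟩
    exact (csInf_le (hSfin.image _).bddBelow ⟨s₀, hs₀, rfl⟩).trans (hM ⟨t, ht, rfl⟩)
  intro t ht
  obtain ⟨s, hs, hmin⟩ :=
    (Set.Nonempty.image _ ⟨s₀, hs₀⟩).csInf_mem (hSfin.image fun s => pairDist t s)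
  exact ⟨s, hs, hmin.le.trans ((le_csSup hbdd ⟨t, ht, rfl⟩).trans hHaus)⟩

lemma ebar_le_ebar_add {m : ℕ} {T S : Set ((Fin m → ℝ) × ℝ)} (dbar : ℝ) {β : ℝ} (hβ : 0 ≤ β)
    (hSfin : S.Finite) (hclose : ∀ t ∈ T, ∃ s ∈ S, pairDist t s ≤ β) (θ : Fin m → ℝ) :
    ebar dbar T θ ≤ ebar dbar S θ + (1 + _root_.enorm θ) * β := by
  have hSnn : 0 ≤ ebar dbar S θ := le_max_left _ _
  have hθ : 0 ≤ _root_.enorm θ := Real.sqrt_nonneg _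
  refine max_le (by positivity) (Real.sSup_le ?_ (by positivity))
  rintro _ ⟨t, ht, rfl⟩
  obtain ⟨s, hs, hts⟩ := hclose t ht
  have hS : |s.2 - θ ⬝ᵥ s.1| - dbar ≤ ebar dbar S θ :=
    (le_csSup (hSfin.image fun q => |q.2 - θ ⬝ᵥ q.1| - dbar).bddAbove ⟨s, hs, rfl⟩).trans
      (le_max_right _ _)
  have hdist : (1 + _root_.enorm θ) * pairDist t s ≤ (1 + _root_.enorm θ) * β :=
    mul_le_mul_of_nonneg_left hts (by positivity)
  linarith [abs_residual_le_add_pairDist θ t s]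

theorem stmt1_general {m : ℕ} (T : Set ((Fin m → ℝ) × ℝ)) (Ω : Set (Fin m → ℝ))
    (hTc : IsCompact T) (hΩne : Ω.Nonempty) (hΩc : IsCompact Ω)
    (dbar : ℝ)
    (S : Set ((Fin m → ℝ) × ℝ)) (hSne : S.Nonempty) (hSfin : S.Finite)
    (β : ℝ) (hβ : 0 ≤ β)
    (hHaus : sSup ((fun t => sInf ((fun s => pairDist t s) '' S)) '' T) ≤ β) :
    sInf ((ebar dbar S) '' Ω) ≥
      sInf ((ebar dbar T) '' Ω) - β * (1 + sSup (enorm '' Ω)) := by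
  have hclose := exists_pairDist_le_of_hausdorff_le hTc hSne hSfin hHaus
  have hNbdd : BddAbove (enorm '' Ω) := (hΩc.image continuous_euclidean_enorm).bddAbove
  refine le_csInf (hΩne.image _) ?_
  rintro _ ⟨θ, hθ, rfl⟩
  have hεT : sInf ((ebar dbar T) '' Ω) ≤ ebar dbar T θ :=
    csInf_le ⟨0, by rintro _ ⟨_, _, rfl⟩; exact le_max_left _ _⟩ ⟨θ, hθ, rfl⟩
  have hnorm : (1 + _root_.enorm θ) * β ≤ β * (1 + sSup (enorm '' Ω)) := by
    rw [mul_comm]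
    exact mul_le_mul_of_nonneg_left (by linarith [le_csSup hNbdd ⟨θ, hθ, rfl⟩]) hβ
  linarith [ebar_le_ebar_add dbar hβ hSfin hclose θ]

/-- Quantitative lower bound from the proof of Theorem 1, claim 2:
if `d_H(T,S) = sup_{t∈T} inf_{s∈S} ‖t−s‖₂ ≤ β`, then
`λ_S ≥ ε* − β (1 + max_{θ∈Ω} ‖θ‖₂)`. -/
theorem stmt1 {m : ℕ} (hm : 1 ≤ m) (T : Set ((Fin m → ℝ) × ℝ)) (Ω : Set (Fin m → ℝ))
    (hTne : T.Nonempty) (hTc : IsCompact T) (hΩne : Ω.Nonempty) (hΩc : IsCompact Ω)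
    (dbar : ℝ) (hd : 0 ≤ dbar)
    (S : Set ((Fin m → ℝ) × ℝ)) (hSne : S.Nonempty) (hSfin : S.Finite) (hST : S ⊆ T)
    (β : ℝ) (hβ : 0 ≤ β)
    (hHaus : sSup ((fun t => sInf ((fun s => pairDist t s) '' S)) '' T) ≤ β) :
    sInf ((ebar dbar S) '' Ω) ≥
      sInf ((ebar dbar T) '' Ω) - β * (1 + sSup (enorm '' Ω)) :=
  stmt1_general T Ω hTc hΩne hΩc dbar S hSne hSfin β hβ hHaus
end

section
/- Let F ⊆ Φ be a nonempty finite subset with one-sided Hausdorff distance d_H(Φ, F) = sup_{φ∈Φ} inf_{ψ∈F} ‖φ − ψ‖₂ ≤ β for some β ≥ 0. Then τ_F(θ̂) ≥ τ(θ̂) − β · max_{θ∈Θ} ‖θ − θ̂‖₂. (Quantitative lower bound from the proof of Lemma 1, claim 2.) -/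
open Matrix Set

/-- Worst-case error bound over a set `R` of regressors:
`τ_R(θ̂) = sup_{φ∈R} sup_{θ∈Θ} |(θ − θ̂)ᵀφ| + ε̂`. -/
noncomputable def tauOn {m : ℕ} (Θ : Set (Fin m → ℝ)) (εhat : ℝ) (θhat : Fin m → ℝ)
    (R : Set (Fin m → ℝ)) : ℝ :=
  sSup ((fun φ => sSup ((fun θ => |(θ - θhat) ⬝ᵥ φ|) '' Θ)) '' R) + εhat

/-- Euclidean (2-)norm of a vector in ℝᵐ. -/
noncomputable def enorm₂ {m : ℕ} (θ : Fin m → ℝ) : ℝ :=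
  Real.sqrt (∑ i, (θ i) ^ 2)

/-! Every regressor `φ ∈ Φ` lies within `β` of some `ψ ∈ F` (the infimum over the finite set `F`
is attained), and by Cauchy–Schwarz `|(θ − θ̂)ᵀφ| ≤ |(θ − θ̂)ᵀψ| + ‖θ − θ̂‖₂ ‖φ − ψ‖₂`. Taking
suprema over `θ ∈ Θ` and then over `φ ∈ Φ` gives `τ(θ̂) ≤ τ_F(θ̂) + β · max_{θ∈Θ} ‖θ − θ̂‖₂`. -/

lemma csSup_image_le_csSup_image_add {ι α : Type*} [ConditionallyCompleteLattice α] [Add α]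
    [AddRightMono α] {S T : Set ι} {f g : ι → α} {c : α} (hS : S.Nonempty)
    (hT : BddAbove (g '' T)) (h : ∀ x ∈ S, ∃ y ∈ T, f x ≤ g y + c) :
    sSup (f '' S) ≤ sSup (g '' T) + c := by
  refine csSup_le (hS.image f) ?_
  rintro _ ⟨x, hx, rfl⟩
  obtain ⟨y, hy, hxy⟩ := h x hx
  exact hxy.trans (add_le_add_left (le_csSup hT (mem_image_of_mem g hy)) c)

section Euclidean

variable {m : ℕ}

lemma enorm₂_eq_norm_toLp (x : Fin m → ℝ) : enorm₂ x = ‖WithLp.toLp 2 x‖ := by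
  simp [enorm₂, EuclideanSpace.norm_eq]

lemma enorm₂_nonneg (x : Fin m → ℝ) : 0 ≤ enorm₂ x := Real.sqrt_nonneg _

@[fun_prop]
lemma continuous_enorm₂ : Continuous (enorm₂ : (Fin m → ℝ) → ℝ) := by
  unfold enorm₂; fun_prop

lemma abs_dotProduct_le_enorm₂_mul (x y : Fin m → ℝ) : |x ⬝ᵥ y| ≤ enorm₂ x * enorm₂ y := by
  simpa [enorm₂_eq_norm_toLp, EuclideanSpace.inner_toLp_toLp, dotProduct_comm]
    using abs_real_inner_le_norm (WithLp.toLp 2 x) (WithLp.toLp 2 y)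

lemma sSup_abs_dotProduct_le_add_mul {Θ : Set (Fin m → ℝ)} (hΘ : IsCompact Θ)
    {θhat φ ψ : Fin m → ℝ} {β : ℝ} (hφψ : enorm₂ (φ - ψ) ≤ β) :
    sSup ((fun θ => |(θ - θhat) ⬝ᵥ φ|) '' Θ) ≤
      sSup ((fun θ => |(θ - θhat) ⬝ᵥ ψ|) '' Θ) + β * sSup ((fun θ => enorm₂ (θ - θhat)) '' Θ) := by
  set M := sSup ((fun θ => enorm₂ (θ - θhat)) '' Θ)
  have hdot : BddAbove ((fun θ => |(θ - θhat) ⬝ᵥ ψ|) '' Θ) :=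
    hΘ.bddAbove_image (by fun_prop)
  have hM : BddAbove ((fun θ => enorm₂ (θ - θhat)) '' Θ) :=
    hΘ.bddAbove_image (by fun_prop)
  have hM₀ : 0 ≤ M := Real.sSup_nonneg (by rintro _ ⟨θ, -, rfl⟩; exact enorm₂_nonneg _)
  have hβ : 0 ≤ β := (enorm₂_nonneg _).trans hφψ
  refine Real.sSup_le ?_ (add_nonneg ?_ (mul_nonneg hβ hM₀))
  · rintro _ ⟨θ, hθ, rfl⟩
    calc |(θ - θhat) ⬝ᵥ φ| = |(θ - θhat) ⬝ᵥ ψ + (θ - θhat) ⬝ᵥ (φ - ψ)| := by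
          rw [← dotProduct_add, add_sub_cancel]
      _ ≤ |(θ - θhat) ⬝ᵥ ψ| + enorm₂ (θ - θhat) * enorm₂ (φ - ψ) :=
          (abs_add_le _ _).trans (add_le_add_right (abs_dotProduct_le_enorm₂_mul _ _) _)
      _ ≤ sSup ((fun θ => |(θ - θhat) ⬝ᵥ ψ|) '' Θ) + M * β :=
          add_le_add (le_csSup hdot (mem_image_of_mem _ hθ))
            (mul_le_mul (le_csSup hM (mem_image_of_mem _ hθ)) hφψ (enorm₂_nonneg _) hM₀)
      _ = _ := by rw [mul_comm]
  · exact Real.sSup_nonneg (by rintro _ ⟨θ, -, rfl⟩; exact abs_nonneg _)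

lemma bddAbove_image_sInf_enorm₂_sub {Φ F : Set (Fin m → ℝ)} (hΦ : IsCompact Φ)
    (hFne : F.Nonempty) (hFfin : F.Finite) :
    BddAbove ((fun φ => sInf ((fun ψ => enorm₂ (φ - ψ)) '' F)) '' Φ) := by
  obtain ⟨ψ₀, hψ₀⟩ := hFne
  obtain ⟨K, hK⟩ : BddAbove ((fun φ => enorm₂ (φ - ψ₀)) '' Φ) :=
    hΦ.bddAbove_image (by fun_prop)
  refine ⟨K, ?_⟩
  rintro _ ⟨φ, hφ, rfl⟩
  exact (csInf_le (hFfin.image _).bddBelow (mem_image_of_mem _ hψ₀)).trans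
    (hK (mem_image_of_mem _ hφ))

lemma exists_mem_enorm₂_sub_le_of_sSup_sInf_le {Φ F : Set (Fin m → ℝ)} {β : ℝ}
    (hΦ : IsCompact Φ) (hFne : F.Nonempty) (hFfin : F.Finite)
    (hHaus : sSup ((fun φ => sInf ((fun ψ => enorm₂ (φ - ψ)) '' F)) '' Φ) ≤ β) :
    ∀ φ ∈ Φ, ∃ ψ ∈ F, enorm₂ (φ - ψ) ≤ β := by
  intro φ hφ
  obtain ⟨ψ, hψ, hψmin⟩ := (hFne.image fun ψ => enorm₂ (φ - ψ)).csInf_mem (hFfin.image _)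
  have hinf_le := le_csSup (bddAbove_image_sInf_enorm₂_sub hΦ hFne hFfin) (mem_image_of_mem _ hφ)
  exact ⟨ψ, hψ, hψmin.le.trans (hinf_le.trans hHaus)⟩

end Euclidean

theorem stmt4_general {m : ℕ} (Φ : Set (Fin m → ℝ)) (Θ : Set (Fin m → ℝ))
    (hΦne : Φ.Nonempty) (hΦc : IsCompact Φ) (hΘc : IsCompact Θ)
    (θhat : Fin m → ℝ) (εhat : ℝ)
    (F : Set (Fin m → ℝ)) (hFne : F.Nonempty) (hFfin : F.Finite)
    (β : ℝ)
    (hHaus : sSup ((fun φ => sInf ((fun ψ => enorm₂ (φ - ψ)) '' F)) '' Φ) ≤ β) :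
    tauOn Θ εhat θhat F ≥
      tauOn Θ εhat θhat Φ - β * sSup ((fun θ => enorm₂ (θ - θhat)) '' Θ) := by
  have hsup : sSup ((fun φ => sSup ((fun θ => |(θ - θhat) ⬝ᵥ φ|) '' Θ)) '' Φ) ≤
      sSup ((fun φ => sSup ((fun θ => |(θ - θhat) ⬝ᵥ φ|) '' Θ)) '' F) +
        β * sSup ((fun θ => enorm₂ (θ - θhat)) '' Θ) := by
    refine csSup_image_le_csSup_image_add hΦne (hFfin.image _).bddAbove fun φ hφ => ?_
    obtain ⟨ψ, hψF, hψβ⟩ := exists_mem_enorm₂_sub_le_of_sSup_sInf_le hΦc hFne hFfin hHaus φ hφ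
    exact ⟨ψ, hψF, sSup_abs_dotProduct_le_add_mul hΘc hψβ⟩
  rw [tauOn, tauOn, ge_iff_le]
  linarith

/-- Quantitative lower bound from the proof of Lemma 1, claim 2: if
`d_H(Φ,F) = sup_{φ∈Φ} inf_{ψ∈F} ‖φ−ψ‖₂ ≤ β`, then
`τ_F(θ̂) ≥ τ(θ̂) − β · max_{θ∈Θ} ‖θ − θ̂‖₂`. -/
theorem stmt4 {m : ℕ} (hm : 1 ≤ m) (Φ : Set (Fin m → ℝ)) (Θ : Set (Fin m → ℝ))
    (hΦne : Φ.Nonempty) (hΦc : IsCompact Φ) (hΘne : Θ.Nonempty) (hΘc : IsCompact Θ)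
    (θhat : Fin m → ℝ) (εhat : ℝ) (hε : 0 ≤ εhat)
    (F : Set (Fin m → ℝ)) (hFne : F.Nonempty) (hFfin : F.Finite) (hFΦ : F ⊆ Φ)
    (β : ℝ) (hβ : 0 ≤ β)
    (hHaus : sSup ((fun φ => sInf ((fun ψ => enorm₂ (φ - ψ)) '' F)) '' Φ) ≤ β) :
    tauOn Θ εhat θhat F ≥
      tauOn Θ εhat θhat Φ - β * sSup ((fun θ => enorm₂ (θ - θhat)) '' Θ) :=
  stmt4_general Φ Θ hΦne hΦc hΘc θhat εhat F hFne hFfin β hHaus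
end

section
/- For every integer p ≥ 1 there exist coefficient vectors α ∈ ℝⁿ, β ∈ ℝ^{n−1}, γ ∈ ℝᵖ and η ∈ ℝᵖ, depending only on (a, b, c, p) and not on the trajectory, such that for every triple of sequences (z, u, v) satisfying the ARX recursion and every k ∈ ℤ: z(k+p) = Σ_{i=0}^{n−1} α_{i+1} z(k−i) + Σ_{j=1}^{n−1} β_j u(k−j) + Σ_{l=0}^{p−1} γ_{l+1} u(k+l) + Σ_{l=0}^{p−1} η_{l+1} v(k+l). (Exact multi-step representation of an ARX system, equation (8) of the paper.) -/
/-! The quantities that are fixed linear combinations of the regressors — the past window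
`z(k), …, z(k-n+1), u(k-1), …, u(k-n+1)` together with `u(k), …, u(k+p-1)` and
`v(k), …, v(k+p-1)` — form a linear space of observables of the trajectories. Shifting time by
one maps the space for horizon `p` into the one for horizon `p + 1`: the only new term `z(k+1)`
is eliminated with the recursion, and `u(k)` joins the future inputs. Since `z(k+1)` itself lies
in the space for horizon `1`, induction puts `z(k+p)` in the space for horizon `p`. -/

open Submodule

structure ARXTrajectory {n : ℕ} (a : Fin n → ℝ) (b : Fin (n - 1) → ℝ) (c : ℝ) where
  z : ℤ → ℝ
  u : ℤ → ℝ
  v : ℤ → ℝ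
  step : ∀ k : ℤ, z (k + 1) =
    ∑ i : Fin n, a i * z (k - (i : ℕ)) +
    ∑ j : Fin (n - 1), b j * u (k - ((j : ℕ) + 1)) +
    c * u k + v k

def timeShift (T : Type*) : (T → ℤ → ℝ) →ₗ[ℝ] (T → ℤ → ℝ) where
  toFun f w k := f w (k + 1)
  map_add' _ _ := rfl
  map_smul' _ _ := rfl

@[simp]
lemma timeShift_apply {T : Type*} (f : T → ℤ → ℝ) (w : T) (k : ℤ) :
    timeShift T f w k = f w (k + 1) :=
  rfl

namespace ARXTrajectory

variable {n : ℕ} {a : Fin n → ℝ} {b : Fin (n - 1) → ℝ} {c : ℝ}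

variable (a b c) in
def regressor (p : ℕ) :
    Fin n ⊕ Fin (n - 1) ⊕ Fin p ⊕ Fin p → (ARXTrajectory a b c → ℤ → ℝ)
  | .inl i => fun w k => w.z (k - (i : ℕ))
  | .inr (.inl j) => fun w k => w.u (k - ((j : ℕ) + 1))
  | .inr (.inr (.inl l)) => fun w k => w.u (k + (l : ℕ))
  | .inr (.inr (.inr l)) => fun w k => w.v (k + (l : ℕ))

variable (a b c) in
abbrev regressorSpan (p : ℕ) : Submodule ℝ (ARXTrajectory a b c → ℤ → ℝ) :=
  span ℝ (Set.range (regressor a b c p))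

lemma regressor_mem_regressorSpan {p : ℕ} (x : Fin n ⊕ Fin (n - 1) ⊕ Fin p ⊕ Fin p) :
    regressor a b c p x ∈ regressorSpan a b c p :=
  subset_span (Set.mem_range_self x)

lemma output_succ_mem_regressorSpan {p : ℕ} (hp : 0 < p) :
    (fun (w : ARXTrajectory a b c) k => w.z (k + 1)) ∈ regressorSpan a b c p := by
  have hstep : (fun (w : ARXTrajectory a b c) k => w.z (k + 1)) =
      ∑ i, a i • regressor a b c p (.inl i) +
      ∑ j, b j • regressor a b c p (.inr (.inl j)) +
      c • regressor a b c p (.inr (.inr (.inl ⟨0, hp⟩))) +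
      regressor a b c p (.inr (.inr (.inr ⟨0, hp⟩))) := by
    funext w k
    simp [regressor, Finset.sum_apply, w.step k]
  rw [hstep]
  refine add_mem (add_mem (add_mem ?_ ?_) (smul_mem _ _ ?_)) ?_ <;>
    first
    | exact sum_mem fun x _ => smul_mem _ _ (regressor_mem_regressorSpan _)
    | exact regressor_mem_regressorSpan _

lemma timeShift_regressor_mem_regressorSpan_succ {p : ℕ}
    (x : Fin n ⊕ Fin (n - 1) ⊕ Fin p ⊕ Fin p) :
    timeShift _ (regressor a b c p x) ∈ regressorSpan a b c (p + 1) := by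
  have shifted (y : Fin n ⊕ Fin (n - 1) ⊕ Fin (p + 1) ⊕ Fin (p + 1))
      (h : timeShift _ (regressor a b c p x) = regressor a b c (p + 1) y) :
      timeShift _ (regressor a b c p x) ∈ regressorSpan a b c (p + 1) :=
    h ▸ regressor_mem_regressorSpan y
  rcases x with ⟨_ | i, hi⟩ | ⟨_ | j, hj⟩ | ⟨l, hl⟩ | ⟨l, hl⟩
  · simpa [timeShift, regressor] using output_succ_mem_regressorSpan (Nat.succ_pos p)
  · exact shifted (.inl ⟨i, by omega⟩) (by ext w k; simp [regressor])
  · exact shifted (.inr (.inr (.inl 0))) (by ext w k; simp [regressor])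
  · exact shifted (.inr (.inl ⟨j, by omega⟩)) (by ext w k; simp [regressor])
  · refine shifted (.inr (.inr (.inl ⟨l + 1, by omega⟩))) ?_
    ext w k
    simp only [timeShift_apply, regressor]
    push_cast
    ring_nf
  · refine shifted (.inr (.inr (.inr ⟨l + 1, by omega⟩))) ?_
    ext w k
    simp only [timeShift_apply, regressor]
    push_cast
    ring_nf

lemma map_timeShift_regressorSpan_le (p : ℕ) :
    (regressorSpan a b c p).map (timeShift _) ≤ regressorSpan a b c (p + 1) := by
  rw [map_span, span_le, ← Set.range_comp]
  rintro _ ⟨x, rfl⟩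
  exact timeShift_regressor_mem_regressorSpan_succ x

lemma output_add_mem_regressorSpan {p : ℕ} (hp : 1 ≤ p) :
    (fun (w : ARXTrajectory a b c) k => w.z (k + p)) ∈ regressorSpan a b c p := by
  induction p, hp using Nat.le_induction with
  | base => simpa using output_succ_mem_regressorSpan Nat.one_pos
  | succ p _ ih =>
    have hshift : (fun (w : ARXTrajectory a b c) k => w.z (k + (p + 1 : ℕ))) =
        timeShift _ (fun w k => w.z (k + p)) := by
      funext w k
      rw [timeShift_apply]
      push_cast
      ring_nf
    rw [hshift]
    exact map_timeShift_regressorSpan_le p (mem_map_of_mem ih)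

end ARXTrajectory

theorem stmt10_general (n : ℕ) (a : Fin n → ℝ) (b : Fin (n - 1) → ℝ) (c : ℝ)
    (p : ℕ) (hp : 1 ≤ p) :
    ∃ (α : Fin n → ℝ) (β : Fin (n - 1) → ℝ) (γ : Fin p → ℝ) (η : Fin p → ℝ),
      ∀ z u v : ℤ → ℝ,
        (∀ k : ℤ, z (k + 1) =
            ∑ i : Fin n, a i * z (k - (i : ℕ)) +
            ∑ j : Fin (n - 1), b j * u (k - ((j : ℕ) + 1)) +
            c * u k + v k) →
        ∀ k : ℤ, z (k + p) =
            ∑ i : Fin n, α i * z (k - (i : ℕ)) +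
            ∑ j : Fin (n - 1), β j * u (k - ((j : ℕ) + 1)) +
            ∑ l : Fin p, γ l * u (k + (l : ℕ)) +
            ∑ l : Fin p, η l * v (k + (l : ℕ)) := by
  obtain ⟨f, hf⟩ := (mem_span_range_iff_exists_fun ℝ).mp
    (ARXTrajectory.output_add_mem_regressorSpan (a := a) (b := b) (c := c) hp)
  refine ⟨f ∘ .inl, f ∘ .inr ∘ .inl, f ∘ .inr ∘ .inr ∘ .inl, f ∘ .inr ∘ .inr ∘ .inr, ?_⟩
  intro z u v hz k
  have hk := congrFun (congrFun hf ⟨z, u, v, hz⟩) k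
  simp only [Fintype.sum_sum_type, Finset.sum_apply, Pi.smul_apply, smul_eq_mul,
    ARXTrajectory.regressor] at hk
  rw [← hk, add_assoc, add_assoc]
  rfl

/-- Exact multi-step representation of an ARX system (equation (8) of the paper):
for every `p ≥ 1` there are coefficient vectors `α, β, γ, η`, depending only on
`(a, b, c, p)`, such that every trajectory of the ARX recursion satisfies the
`p`-steps-ahead formula. -/
theorem stmt10 (n : ℕ) (hn : 1 ≤ n) (a : Fin n → ℝ) (b : Fin (n - 1) → ℝ) (c : ℝ)
    (p : ℕ) (hp : 1 ≤ p) :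
    ∃ (α : Fin n → ℝ) (β : Fin (n - 1) → ℝ) (γ : Fin p → ℝ) (η : Fin p → ℝ),
      ∀ z u v : ℤ → ℝ,
        (∀ k : ℤ, z (k + 1) =
            ∑ i : Fin n, a i * z (k - (i : ℕ)) +
            ∑ j : Fin (n - 1), b j * u (k - ((j : ℕ) + 1)) +
            c * u k + v k) →
        ∀ k : ℤ, z (k + p) =
            ∑ i : Fin n, α i * z (k - (i : ℕ)) +
            ∑ j : Fin (n - 1), β j * u (k - ((j : ℕ) + 1)) +
            ∑ l : Fin p, γ l * u (k + (l : ℕ)) +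
            ∑ l : Fin p, η l * v (k + (l : ℕ)) :=
  stmt10_general n a b c p hp
end

section
/- Let X : ℕ → ℝⁿ satisfy X(k+1) = A X(k) + B u(k) + M w(k) for all k, with |w(j)| ≤ w̄ for all j, and let z(k) = C X(k). Fix k ∈ ℕ, p ≥ 1, and suppose X_y ∈ ℝⁿ satisfies X_y − X(k) = E δ for some δ ∈ ℝᵒ with ‖δ‖_∞ ≤ d̄, where n = 2o − 1 and E = [I_o ; 0_{(o−1)×o}] ∈ ℝ^{n×o}. Define ẑ(k+p) = C Aᵖ X_y + Σ_{i=0}^{p−1} C Aⁱ B u(k+p−1−i). Then |z(k+p) − ẑ(k+p)| ≤ Σ_{i=0}^{p−1} |C Aⁱ M| · w̄ + ‖C Aᵖ E‖_∞ · d̄, where ‖C Aᵖ E‖_∞ denotes the sum of the absolute values of the entries of the row vector C Aᵖ E. (Equation (38) of the paper.) -/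
open Matrix

/-!
Unrolling the recursion, `z(k+p) = C Aᵖ X(k) + Σ_{i<p} C Aⁱ (B u(k+p-1-i) + M w(k+p-1-i))`, so the
input terms cancel against the prediction and the error is
`Σ_{i<p} (C Aⁱ M) w(k+p-1-i) − (C Aᵖ E) ⬝ δ`. Each of the two terms is a sum of products whose
second factors are bounded by `w̄` resp. `d̄`.
-/

theorem eq_pow_mulVec_add_sum_of_succ {R n : Type*} [Semiring R] [Fintype n] [DecidableEq n]
    {A : Matrix n n R} {f : ℕ → n → R} {X : ℕ → n → R}
    (hX : ∀ k, X (k + 1) = A *ᵥ X k + f k) (k q : ℕ) :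
    X (k + q) = (A ^ q) *ᵥ X k + ∑ i ∈ Finset.range q, (A ^ i) *ᵥ f (k + q - 1 - i) := by
  induction q with
  | zero => simp
  | succ q ih =>
    have hshift : ∀ i ∈ Finset.range q,
        A *ᵥ ((A ^ i) *ᵥ f (k + q - 1 - i)) = (A ^ (i + 1)) *ᵥ f (k + q + 1 - 1 - (i + 1)) := by
      intro i _
      rw [mulVec_mulVec, ← pow_succ', show k + q + 1 - 1 - (i + 1) = k + q - 1 - i by omega]
    rw [← add_assoc, hX, ih, mulVec_add, mulVec_mulVec, ← pow_succ', mulVec_sum,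
      Finset.sum_congr rfl hshift, Finset.sum_range_succ' _ q,
      show k + q + 1 - 1 - 0 = k + q by omega, pow_zero, one_mulVec, add_assoc]

theorem abs_sum_mul_le_sum_abs_mul {ι R : Type*} [Ring R] [LinearOrder R]
    [IsStrictOrderedRing R] (s : Finset ι) (a b : ι → R) {c : R} (hb : ∀ i ∈ s, |b i| ≤ c) :
    |∑ i ∈ s, a i * b i| ≤ (∑ i ∈ s, |a i|) * c :=
  calc |∑ i ∈ s, a i * b i|
      ≤ ∑ i ∈ s, |a i * b i| := Finset.abs_sum_le_sum_abs _ _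
    _ ≤ ∑ i ∈ s, |a i| * c := Finset.sum_le_sum fun i hi => by
        rw [abs_mul]
        exact mul_le_mul_of_nonneg_left (hb i hi) (abs_nonneg _)
    _ = (∑ i ∈ s, |a i|) * c := (Finset.sum_mul _ _ _).symm

theorem abs_dotProduct_le_sum_abs_mul {ι R : Type*} [Fintype ι] [Ring R] [LinearOrder R]
    [IsStrictOrderedRing R] (v x : ι → R) {c : R} (hx : ∀ i, |x i| ≤ c) :
    |v ⬝ᵥ x| ≤ (∑ i, |v i|) * c :=
  abs_sum_mul_le_sum_abs_mul _ v x fun i _ => hx i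

theorem stmt12_general (o : ℕ)
    (A : Matrix (Fin (2 * o - 1)) (Fin (2 * o - 1)) ℝ)
    (B M : Fin (2 * o - 1) → ℝ) (C : Fin (2 * o - 1) → ℝ)
    (u w : ℕ → ℝ) (wbar : ℝ) (hw : ∀ j, |w j| ≤ wbar)
    (dbar : ℝ)
    (X : ℕ → Fin (2 * o - 1) → ℝ)
    (hX : ∀ k, X (k + 1) = A.mulVec (X k) + u k • B + w k • M)
    (E : Matrix (Fin (2 * o - 1)) (Fin o) ℝ)
    (k p : ℕ)
    (Xy : Fin (2 * o - 1) → ℝ) (δ : Fin o → ℝ)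
    (hδ : ∀ i, |δ i| ≤ dbar) (hXy : Xy - X k = E.mulVec δ) :
    |C ⬝ᵥ X (k + p) -
        (C ⬝ᵥ (A ^ p).mulVec Xy +
          ∑ i ∈ Finset.range p, (C ⬝ᵥ (A ^ i).mulVec B) * u (k + p - 1 - i))| ≤
      (∑ i ∈ Finset.range p, |C ⬝ᵥ (A ^ i).mulVec M|) * wbar +
        (∑ j : Fin o, |Matrix.vecMul (Matrix.vecMul C (A ^ p)) E j|) * dbar := by
  have hstate := eq_pow_mulVec_add_sum_of_succ (A := A) (X := X)
    (f := fun k => u k • B + w k • M) (fun k => by rw [hX, add_assoc]) k p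
  have herr : C ⬝ᵥ X (k + p) -
      (C ⬝ᵥ (A ^ p).mulVec Xy +
        ∑ i ∈ Finset.range p, (C ⬝ᵥ (A ^ i).mulVec B) * u (k + p - 1 - i)) =
      ∑ i ∈ Finset.range p, (C ⬝ᵥ (A ^ i).mulVec M) * w (k + p - 1 - i)
        - vecMul (vecMul C (A ^ p)) E ⬝ᵥ δ := by
    rw [hstate, eq_add_of_sub_eq' hXy, ← dotProduct_mulVec, ← dotProduct_mulVec]
    simp only [mulVec_add, mulVec_smul, dotProduct_add, dotProduct_sum, dotProduct_smul,
      smul_eq_mul, Finset.sum_add_distrib, mul_comm (u _), mul_comm (w _)]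
    ring
  rw [herr]
  exact (abs_sub _ _).trans (add_le_add
    (abs_sum_mul_le_sum_abs_mul _ _ _ fun i _ => hw _)
    (abs_dotProduct_le_sum_abs_mul _ _ hδ))

/-- Equation (38) of the paper: bound on the `p`-steps-ahead prediction error of the
state-space model, when the state is initialized with a noise-corrupted value
`X_y = X(k) + E δ`, `‖δ‖_∞ ≤ d̄`, and the process disturbance satisfies `|w| ≤ w̄`:
`|z(k+p) − ẑ(k+p)| ≤ Σ_{i=0}^{p−1} |C Aⁱ M| w̄ + ‖C Aᵖ E‖_∞ d̄`,
where `‖C Aᵖ E‖_∞` is the sum of the absolute values of the entries of the row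
vector `C Aᵖ E`. -/
theorem stmt12 (o : ℕ) (ho : 1 ≤ o)
    (A : Matrix (Fin (2 * o - 1)) (Fin (2 * o - 1)) ℝ)
    (B M : Fin (2 * o - 1) → ℝ) (C : Fin (2 * o - 1) → ℝ)
    (u w : ℕ → ℝ) (wbar : ℝ) (hwbar : 0 ≤ wbar) (hw : ∀ j, |w j| ≤ wbar)
    (dbar : ℝ) (hdbar : 0 ≤ dbar)
    (X : ℕ → Fin (2 * o - 1) → ℝ)
    (hX : ∀ k, X (k + 1) = A.mulVec (X k) + u k • B + w k • M)
    (E : Matrix (Fin (2 * o - 1)) (Fin o) ℝ)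
    (hE : ∀ (i : Fin (2 * o - 1)) (j : Fin o), E i j = if (i : ℕ) = (j : ℕ) then 1 else 0)
    (k p : ℕ) (hp : 1 ≤ p)
    (Xy : Fin (2 * o - 1) → ℝ) (δ : Fin o → ℝ)
    (hδ : ∀ i, |δ i| ≤ dbar) (hXy : Xy - X k = E.mulVec δ) :
    |C ⬝ᵥ X (k + p) -
        (C ⬝ᵥ (A ^ p).mulVec Xy +
          ∑ i ∈ Finset.range p, (C ⬝ᵥ (A ^ i).mulVec B) * u (k + p - 1 - i))| ≤
      (∑ i ∈ Finset.range p, |C ⬝ᵥ (A ^ i).mulVec M|) * wbar +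
        (∑ j : Fin o, |Matrix.vecMul (Matrix.vecMul C (A ^ p)) E j|) * dbar :=
  stmt12_general o A B M C u w wbar hw dbar X hX E k p Xy δ hδ hXy
end
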